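/- arXiv:1807.11437 — 2 statements merged into one kernel-verified Lean document; each statement's English description precedes it below -/
import Mathlib

section
/- Every symmetric polynomial evaluated at the Jucys–Murphy elements J_2, ..., J_n lies in the center of the group algebra ℚ[S_n]. In particular, each elementary symmetric polynomial σ_k(J_2, ..., J_n) is central in ℚ[S_n]. -/
open Equiv Finset

/-- The `k`-th Jucys–Murphy element `J_k = Σ_{i<k} (i k)` in `ℚ[S_n]`. -/
noncomputable def jucysMurphy (n : ℕ) (k : Fin n) : MonoidAlgebra ℚ (Equiv.Perm (Fin n)) :=
  ∑ i ∈ Finset.Iio k, MonoidAlgebra.single (Equiv.swap i k) 1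

/-- Evaluation of a multivariate polynomial at the (pairwise commuting) Jucys–Murphy
elements, multiplying the factors of each monomial in the fixed order of the indices. -/
noncomputable def evalJM (n : ℕ) (p : MvPolynomial (Fin n) ℚ) :
    MonoidAlgebra ℚ (Equiv.Perm (Fin n)) :=
  ∑ d ∈ p.support, p.coeff d • ((List.finRange n).map fun i => jucysMurphy n i ^ d i).prod

/-!
Let `s = (k k+1)` be an adjacent transposition. Conjugation by `s` fixes `J_j` for
`j ∉ {k, k+1}`, and the relations `s J_k = J_{k+1} s - 1`, `s J_{k+1} = J_k s + 1` show that `s`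
commutes with `J_k + J_{k+1}` and `J_k J_{k+1}`. Hence `s` commutes with every coefficient of
`∏_j (X + J_j) = (X² + (J_k + J_{k+1}) X + J_k J_{k+1}) ∏_{j ≠ k, k+1} (X + J_j)`, a polynomial
over the commutative algebra generated by the `J_j`. By Vieta these coefficients are the
`e_m(J)`; as adjacent transpositions generate `S_n`, the `e_m(J)` are central, and by the
fundamental theorem of symmetric polynomials so is every symmetric polynomial in the `J_j`.
-/

open MonoidAlgebra
open scoped IsMulCommutative

theorem MonoidAlgebra.mem_center_of_forall_commute_single {k G : Type*} [CommSemiring k]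
    [Monoid G] {S : Set G} (hS : Submonoid.closure S = ⊤) {a : MonoidAlgebra k G}
    (ha : ∀ g ∈ S, Commute (single g (1 : k)) a) :
    a ∈ Subalgebra.center k (MonoidAlgebra k G) := by
  have hsingle (g : G) : Commute (single g (1 : k)) a := by
    induction (hS ▸ Submonoid.mem_top g : g ∈ Submonoid.closure S)
      using Submonoid.closure_induction with
    | mem g hg => exact ha g hg
    | one => simpa only [← MonoidAlgebra.one_def] using Commute.one_left a
    | mul g h _ _ hg hh => simpa only [single_mul_single, mul_one] using hg.mul_left hh
  rw [Subalgebra.mem_center_iff]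
  intro b
  induction b using MonoidAlgebra.induction_on with
  | of g => exact hsingle g
  | add x y hx hy => rw [add_mul, mul_add, hx, hy]
  | smul r x hx => rw [smul_mul_assoc, mul_smul_comm, hx]

theorem Equiv.Perm.mclosure_swap_adjacent (n : ℕ) :
    Submonoid.closure {g : Perm (Fin n) | ∃ k k' : Fin n, (k' : ℕ) = k + 1 ∧ g = swap k k'} =
      ⊤ := by
  cases n with
  | zero => exact eq_top_iff.2 fun g _ => Subsingleton.elim g 1 ▸ one_mem _
  | succ m =>
    refine top_unique ((mclosure_swap_castSucc_succ m).symm.le.trans (Submonoid.closure_mono ?_))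
    rintro _ ⟨i, rfl⟩
    exact ⟨i.castSucc, i.succ, by simp, rfl⟩

theorem Fin.Iio_eq_insert_Iio_of_val_eq_succ {n : ℕ} {k k' : Fin n} (hk : (k' : ℕ) = k + 1) :
    Iio k' = insert k (Iio k) := by
  ext i
  simp only [mem_Iio, mem_insert, Fin.lt_def, Fin.ext_iff]
  omega

theorem MvPolynomial.aeval_esymm_eq_coeff_prod_X_add_C {σ R S : Type*} [Fintype σ]
    [CommSemiring R] [CommSemiring S] [Algebra R S] (f : σ → S) {m : ℕ}
    (hm : m ≤ Fintype.card σ) :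
    aeval f (esymm σ R m) =
      (∏ i, (Polynomial.X + Polynomial.C (f i))).coeff (Fintype.card σ - m) := by
  rw [aeval_esymm_eq_multiset_esymm, Finset.prod, Multiset.prod_X_add_C_coeff' _ _ (by simp),
    card_val, card_univ, Nat.sub_sub_self hm]

section JucysMurphy

variable {n : ℕ}

theorem single_mul_jucysMurphy (g : Perm (Fin n)) (j : Fin n) :
    single g (1 : ℚ) * jucysMurphy n j =
      (∑ i ∈ Iio j, single (swap (g i) (g j)) (1 : ℚ)) * single g 1 := by
  simp only [jucysMurphy, mul_sum, sum_mul, single_mul_single, mul_one, mul_swap_eq_swap_mul]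

theorem commute_single_swap_jucysMurphy_of_lt {u v j : Fin n} (hu : u < j) (hv : v < j) :
    Commute (single (swap u v) (1 : ℚ)) (jucysMurphy n j) := by
  have hsupp : {i | swap u v i ≠ i} ⊆ Iio j := fun i hi => by
    obtain ⟨-, rfl | rfl⟩ := swap_apply_ne_self_iff.1 hi <;> simpa
  rw [Commute, SemiconjBy, single_mul_jucysMurphy, swap_apply_of_ne_of_ne hu.ne' hv.ne',
    (swap u v).sum_comp _ (fun i => single (swap i j) (1 : ℚ)) hsupp, jucysMurphy]

theorem commute_single_swap_jucysMurphy_of_gt {u v j : Fin n} (hu : j < u) (hv : j < v) :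
    Commute (single (swap u v) (1 : ℚ)) (jucysMurphy n j) := by
  have hfix (i : Fin n) (hi : i ≤ j) : swap u v i = i :=
    swap_apply_of_ne_of_ne (hi.trans_lt hu).ne (hi.trans_lt hv).ne
  rw [Commute, SemiconjBy, single_mul_jucysMurphy, hfix j le_rfl, jucysMurphy]
  congr 1
  exact sum_congr rfl fun i hi => by rw [hfix i (mem_Iio.1 hi).le]

theorem commute_jucysMurphy (j m : Fin n) : Commute (jucysMurphy n j) (jucysMurphy n m) := by
  wlog h : j < m generalizing j m
  · obtain rfl | h := (not_lt.1 h).eq_or_lt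
    · exact Commute.refl _
    · exact (this m j h).symm
  exact Commute.sum_left _ _ _ fun i hi =>
    commute_single_swap_jucysMurphy_of_lt ((mem_Iio.1 hi).trans h) h

section Adjacent

variable {k k' : Fin n} (hk : (k' : ℕ) = k + 1)
include hk

theorem swap_adjacent_apply_of_mem_Iio {i : Fin n} (hi : i ∈ Iio k) : swap k k' i = i := by
  rw [mem_Iio, Fin.lt_def] at hi
  exact swap_apply_of_ne_of_ne (Fin.ne_of_val_ne (by omega)) (Fin.ne_of_val_ne (by omega))

theorem single_swap_mul_jucysMurphy_left :
    single (swap k k') (1 : ℚ) * jucysMurphy n k =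
      jucysMurphy n k' * single (swap k k') 1 - 1 := by
  rw [single_mul_jucysMurphy, swap_apply_left,
    sum_congr rfl fun i hi => by rw [swap_adjacent_apply_of_mem_Iio hk hi], jucysMurphy,
    Fin.Iio_eq_insert_Iio_of_val_eq_succ hk, sum_insert (by simp), add_mul, single_mul_single,
    swap_mul_self, mul_one, ← MonoidAlgebra.one_def, add_sub_cancel_left]

theorem single_swap_mul_jucysMurphy_right :
    single (swap k k') (1 : ℚ) * jucysMurphy n k' =
      jucysMurphy n k * single (swap k k') 1 + 1 := by
  rw [single_mul_jucysMurphy, swap_apply_right, Fin.Iio_eq_insert_Iio_of_val_eq_succ hk,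
    sum_insert (by simp), sum_congr rfl fun i hi => by rw [swap_adjacent_apply_of_mem_Iio hk hi],
    swap_apply_left, swap_comm, add_mul, single_mul_single, swap_mul_self, mul_one,
    ← MonoidAlgebra.one_def, add_comm, jucysMurphy]

theorem commute_single_swap_jucysMurphy_add :
    Commute (single (swap k k') (1 : ℚ)) (jucysMurphy n k + jucysMurphy n k') := by
  rw [Commute, SemiconjBy, mul_add, single_swap_mul_jucysMurphy_left hk,
    single_swap_mul_jucysMurphy_right hk, add_mul]
  abel

theorem commute_single_swap_jucysMurphy_mul :
    Commute (single (swap k k') (1 : ℚ)) (jucysMurphy n k * jucysMurphy n k') := by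
  rw [Commute, SemiconjBy, ← mul_assoc, single_swap_mul_jucysMurphy_left hk, sub_mul, mul_assoc,
    single_swap_mul_jucysMurphy_right hk, mul_add, ← mul_assoc, (commute_jucysMurphy k' k).eq,
    mul_assoc, mul_one, one_mul, add_sub_cancel_right]

theorem commute_single_swap_jucysMurphy_of_ne {j : Fin n} (hjk : j ≠ k) (hjk' : j ≠ k') :
    Commute (single (swap k k') (1 : ℚ)) (jucysMurphy n j) := by
  have hjk'_val := Fin.val_ne_of_ne hjk'
  rcases lt_or_gt_of_ne hjk with h | h
  · exact commute_single_swap_jucysMurphy_of_gt h (Fin.lt_def.2 (by rw [Fin.lt_def] at h; omega))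
  · exact commute_single_swap_jucysMurphy_of_lt h (Fin.lt_def.2 (by rw [Fin.lt_def] at h; omega))

end Adjacent

variable (n) in
noncomputable def jucysMurphySubalgebra : Subalgebra ℚ (MonoidAlgebra ℚ (Perm (Fin n))) :=
  Algebra.adjoin ℚ (Set.range (jucysMurphy n))

instance : IsMulCommutative (jucysMurphySubalgebra n) :=
  Algebra.isMulCommutative_adjoin ℚ <| by
    rintro _ ⟨j, rfl⟩ _ ⟨m, rfl⟩
    exact (commute_jucysMurphy j m).eq

variable (n) in
noncomputable def jucysMurphySubalgebra.gen (j : Fin n) : jucysMurphySubalgebra n :=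
  ⟨jucysMurphy n j, Algebra.subset_adjoin ⟨j, rfl⟩⟩

variable (n) in
noncomputable def evalJMAlgHom :
    MvPolynomial (Fin n) ℚ →ₐ[ℚ] MonoidAlgebra ℚ (Perm (Fin n)) :=
  (jucysMurphySubalgebra n).val.comp (MvPolynomial.aeval (jucysMurphySubalgebra.gen n))

theorem evalJMAlgHom_apply (p : MvPolynomial (Fin n) ℚ) : evalJMAlgHom n p = evalJM n p := by
  simp only [evalJMAlgHom, AlgHom.comp_apply, MvPolynomial.aeval_def, MvPolynomial.eval₂_eq',
    map_sum, map_mul, Fin.prod_univ_def, map_list_prod, List.map_map, evalJM, Algebra.smul_def]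
  rfl

open Polynomial in
theorem commute_single_swap_coeff_prod_X_add_C_jucysMurphy {k k' : Fin n}
    (hk : (k' : ℕ) = k + 1) (j : ℕ) :
    Commute (single (swap k k') (1 : ℚ))
      ((∏ i, (X + C (jucysMurphySubalgebra.gen n i))).coeff j :
        MonoidAlgebra ℚ (Perm (Fin n))) := by
  set K := (Subalgebra.centralizer ℚ {single (swap k k') (1 : ℚ)}).comap
    (jucysMurphySubalgebra n).val
  set x := jucysMurphySubalgebra.gen n
  suffices hlifts : ∏ i, (X + C (x i)) ∈ lifts K.val.toRingHom by
    obtain ⟨c, hc⟩ := (lifts_iff_coeff_lifts _).1 hlifts j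
    have hcK := c.2
    rw [Subalgebra.mem_comap, Subalgebra.mem_centralizer_iff] at hcK
    rw [← hc]
    exact hcK _ rfl
  have hC (c) (hc : Commute (single (swap k k') (1 : ℚ)) c.1) : C c ∈ lifts K.val.toRingHom :=
    C_mem_lifts K.val.toRingHom ⟨c, by simpa [K, Subalgebra.mem_centralizer_iff] using hc.eq⟩
  have hkk' : k' ≠ k := Fin.ne_of_val_ne (by omega)
  rw [← mul_prod_erase _ _ (mem_univ k),
    ← mul_prod_erase _ _ (mem_erase.2 ⟨hkk', mem_univ k'⟩), ← mul_assoc]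
  refine mul_mem ?_ (prod_mem fun i hi => add_mem (X_mem_lifts _) (hC _ ?_))
  · have hquad : (X + C (x k)) * (X + C (x k')) =
        X ^ 2 + C (x k + x k') * X + C (x k * x k') := by
      simp only [map_add, map_mul]
      ring
    rw [hquad]
    exact add_mem (add_mem (pow_mem (X_mem_lifts _) 2)
      (mul_mem (hC _ (commute_single_swap_jucysMurphy_add hk)) (X_mem_lifts _)))
      (hC _ (commute_single_swap_jucysMurphy_mul hk))
  · obtain ⟨hik', hik⟩ := mem_erase.1 hi
    exact commute_single_swap_jucysMurphy_of_ne hk (ne_of_mem_erase hik) hik'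

theorem evalJMAlgHom_esymm_mem_center {m : ℕ} (hm : m ≤ n) :
    evalJMAlgHom n (MvPolynomial.esymm (Fin n) ℚ m) ∈ Subalgebra.center ℚ _ := by
  refine mem_center_of_forall_commute_single (Perm.mclosure_swap_adjacent n) ?_
  rintro _ ⟨k, k', hk, rfl⟩
  rw [evalJMAlgHom, AlgHom.comp_apply,
    MvPolynomial.aeval_esymm_eq_coeff_prod_X_add_C _ (by simpa using hm)]
  exact commute_single_swap_coeff_prod_X_add_C_jucysMurphy hk _

theorem evalJM_mem_center_of_isSymmetric {p : MvPolynomial (Fin n) ℚ} (hp : p.IsSymmetric) :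
    evalJM n p ∈ Set.center (MonoidAlgebra ℚ (Perm (Fin n))) := by
  obtain ⟨q, hq⟩ := MvPolynomial.esymmAlgHom_fin_surjective ℚ le_rfl ⟨p, hp⟩
  set E := Algebra.adjoin ℚ (Set.range fun i : Fin n => MvPolynomial.esymm (Fin n) ℚ (i + 1))
    with hE
  have hp_mem : p ∈ E := by
    rw [hE, Algebra.adjoin_range_eq_range_aeval]
    exact (AlgHom.mem_range _).2 ⟨q, by rw [← MvPolynomial.esymmAlgHom_apply, hq]⟩
  have hle : E ≤ (Subalgebra.center ℚ _).comap (evalJMAlgHom n) :=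
    Algebra.adjoin_le <| Set.range_subset_iff.2 fun i => evalJMAlgHom_esymm_mem_center i.2
  rw [← evalJMAlgHom_apply, Semigroup.mem_center_iff]
  exact (Subalgebra.mem_center_iff (R := ℚ)).1 (hle hp_mem)

end JucysMurphy

/-- Every symmetric polynomial evaluated at the Jucys–Murphy elements is central in
`ℚ[S_n]`; in particular each elementary symmetric polynomial of them is central. -/
theorem symmetric_poly_of_jucysMurphy_mem_center (n : ℕ) :
    (∀ p : MvPolynomial (Fin n) ℚ, p.IsSymmetric →
      evalJM n p ∈ Set.center (MonoidAlgebra ℚ (Equiv.Perm (Fin n)))) ∧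
    (∀ k : ℕ, evalJM n (MvPolynomial.esymm (Fin n) ℚ k) ∈
      Set.center (MonoidAlgebra ℚ (Equiv.Perm (Fin n)))) :=
  ⟨fun _ => evalJM_mem_center_of_isSymmetric,
    fun k => evalJM_mem_center_of_isSymmetric (MvPolynomial.esymm_isSymmetric _ _ k)⟩
end

section
/- (Jucys correspondence) For every k with 0 ≤ k ≤ n-1, the k-th elementary symmetric polynomial evaluated at the Jucys–Murphy elements satisfies σ_k(J_2, ..., J_n) = Σ_{μ ⊢ n, ℓ(μ) = n - k} C_μ in ℚ[S_n], where the sum is over partitions μ of n with exactly n - k parts. -/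
open Equiv Finset

/-!
Write `L(σ) = n - #cycles(σ)`. If `σ` fixes `x` and `a ≠ x`, then `σ * (a x)` inserts `x` into the
cycle of `a`, so `L` grows by one; conversely every `τ` moving `x` arises in this way from exactly
one pair `(σ, a)`, namely `a = τ⁻¹ x`, `σ = τ * (a x)`. Hence, with `J_x = Σ_{a < x} (a x)`, the
recursion `e_{k+1}(J_1, …, J_x) = e_{k+1}(J_1, …, J_{x-1}) + e_k(J_1, …, J_{x-1}) J_x` matches the
splitting of `{τ ∈ S_x : L(τ) = k + 1}` according to whether `τ` fixes `x`, and induction on `x`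
shows that `e_k(J_1, …, J_m)` is the sum of the permutations of `{1, …, m}` with `L = k`.
-/

namespace Equiv.Perm

variable {α : Type*} [DecidableEq α] [Fintype α]

/-- `n - ℓ(μ)` for `σ` of cycle type `μ ⊢ n`, written without reference to `n = card α`. -/
def absLength (σ : Perm α) : ℕ := #σ.support - Multiset.card σ.cycleType

theorem two_mul_card_cycleType_le (σ : Perm α) : 2 * Multiset.card σ.cycleType ≤ #σ.support := by
  rw [← sum_cycleType, mul_comm, ← smul_eq_mul]
  exact Multiset.card_nsmul_le_sum fun _ => two_le_of_mem_cycleType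

theorem absLength_add_card_cycleType (σ : Perm α) :
    absLength σ + Multiset.card σ.cycleType = #σ.support := by
  have := two_mul_card_cycleType_le σ
  unfold absLength; omega

theorem absLength_le_card (σ : Perm α) : absLength σ ≤ Fintype.card α :=
  (Nat.sub_le _ _).trans (card_le_univ _)

theorem absLength_eq_zero_iff {σ : Perm α} : absLength σ = 0 ↔ σ = 1 := by
  refine ⟨fun h => card_cycleType_eq_zero.mp ?_, fun h => by simp [h, absLength]⟩
  have := two_mul_card_cycleType_le σ
  have := absLength_add_card_cycleType σ
  omega

theorem card_parts_partition (σ : Perm α) :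
    Multiset.card σ.partition.parts = Fintype.card α - absLength σ := by
  have := absLength_add_card_cycleType σ
  have := card_le_univ σ.support
  rw [parts_partition, Multiset.card_add, Multiset.card_replicate]
  omega

theorem IsCycle.absLength {c : Perm α} (hc : c.IsCycle) : absLength c = #c.support - 1 := by
  rw [Perm.absLength, hc.cycleType, Multiset.card_singleton]

theorem Disjoint.absLength_mul {σ τ : Perm α} (h : Disjoint σ τ) :
    absLength (σ * τ) = absLength σ + absLength τ := by
  have := absLength_add_card_cycleType σ
  have := absLength_add_card_cycleType τ
  have := absLength_add_card_cycleType (σ * τ)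
  rw [h.cycleType_mul, Multiset.card_add, h.card_support_mul] at this
  omega

theorem support_mul_swap {σ : Perm α} {a x : α} (ha : a ∈ σ.support) (hx : x ∉ σ.support) :
    (σ * swap a x).support = insert x σ.support := by
  have hσx : σ x = x := notMem_support.mp hx
  have hσa : σ a ≠ x := fun h => hx (h ▸ apply_mem_support.mpr ha)
  ext y
  rcases eq_or_ne y x with rfl | hyx
  · simp [hσa]
  rcases eq_or_ne y a with rfl | hya
  · simp [hσx, ha, hyx.symm]
  · simp [swap_apply_of_ne_of_ne hya hyx, hyx]

theorem IsCycle.mul_swap {c : Perm α} (hc : c.IsCycle) {a x : α} (ha : a ∈ c.support)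
    (hx : x ∉ c.support) : (c * swap a x).IsCycle := by
  set g := c * swap a x
  have hcx : c x = x := notMem_support.mp hx
  have hga : g a = x := by simp [g, hcx]
  -- `c` agrees with `g` off `a`, and `c a = g (g a)`, so every `c`-step stays in one `g`-cycle.
  have step : ∀ y, g.SameCycle y (c y) := by
    intro y
    by_cases hya : y = a
    · subst hya
      exact ⟨2, by simp [g, pow_two, hcx]⟩
    by_cases hyx : y = x
    · subst hyx; rw [hcx]
    exact ⟨1, by simp [g, swap_apply_of_ne_of_ne hya hyx]⟩
  have hpow : ∀ i : ℕ, g.SameCycle a ((c ^ i) a) := by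
    intro i
    induction i with
    | zero => rfl
    | succ i ih => exact ih.trans (by rw [pow_succ', mul_apply]; exact step _)
  refine ⟨a, by simp [hga, Ne.symm (ne_of_mem_of_not_mem ha hx)], fun y hy => ?_⟩
  rw [← mem_support, support_mul_swap ha hx, mem_insert] at hy
  rcases hy with rfl | hy
  · exact ⟨1, by simp [hga]⟩
  · obtain ⟨i, rfl⟩ := hc.exists_pow_eq (mem_support.mp ha) (mem_support.mp hy)
    exact hpow i

theorem absLength_swap {a x : α} (h : a ≠ x) : absLength (swap a x) = 1 := by
  rw [(isCycle_swap h).absLength, card_support_swap h]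

/-- `(a x)` merges the fixed point `x` into the cycle of `a` in `σ`: that cycle is split off as
`c = σ.cycleOf a`, and `c * (a x)` is again a cycle, one point longer. -/
theorem absLength_mul_swap {σ : Perm α} {a x : α} (hx : σ x = x) (hax : a ≠ x) :
    absLength (σ * swap a x) = absLength σ + 1 := by
  have hxσ : x ∉ σ.support := notMem_support.mpr hx
  by_cases ha : σ a = a
  · have hd : Disjoint σ (swap a x) := by
      rw [disjoint_iff_disjoint_support, support_swap hax]
      simp [ha, hx]
    rw [hd.absLength_mul, absLength_swap hax]
  set c := σ.cycleOf a
  set d := σ * c⁻¹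
  have haσ : a ∈ σ.support := mem_support.mpr ha
  have hc : c.IsCycle := isCycle_cycleOf σ ha
  have hdc : Disjoint d c :=
    disjoint_mul_inv_of_mem_cycleFactorsFinset (cycleOf_mem_cycleFactorsFinset_iff.mpr haσ)
  have hσ : σ = d * c := by simp [d]
  have hac : a ∈ c.support := mem_support_cycleOf_iff.mpr ⟨SameCycle.refl _ _, haσ⟩
  have hxd : x ∉ d.support ∧ x ∉ c.support := by
    rw [hσ, hdc.support_mul, mem_union, not_or] at hxσ
    exact hxσ
  have hdc' : Disjoint d (c * swap a x) := by
    rw [disjoint_iff_disjoint_support, support_mul_swap hac hxd.2, disjoint_insert_right]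
    exact ⟨hxd.1, disjoint_iff_disjoint_support.mp hdc⟩
  have := hc.two_le_card_support
  rw [hσ, mul_assoc, hdc'.absLength_mul, hdc.absLength_mul, hc.absLength,
    (hc.mul_swap hac hxd.2).absLength, support_mul_swap hac hxd.2, card_insert_of_notMem hxd.2]
  omega

def permsOfAbsLength (s : Finset α) (k : ℕ) : Finset (Perm α) :=
  {σ | σ.support ⊆ s ∧ absLength σ = k}

@[simp]
theorem mem_permsOfAbsLength {s : Finset α} {k : ℕ} {σ : Perm α} :
    σ ∈ permsOfAbsLength s k ↔ σ.support ⊆ s ∧ absLength σ = k := by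
  simp [permsOfAbsLength]

theorem permsOfAbsLength_zero (s : Finset α) : permsOfAbsLength s 0 = {1} := by
  ext σ
  simp only [mem_permsOfAbsLength, absLength_eq_zero_iff, mem_singleton]
  exact ⟨And.right, fun h => ⟨by simp [h], h⟩⟩

theorem permsOfAbsLength_empty_succ (k : ℕ) : permsOfAbsLength (∅ : Finset α) (k + 1) = ∅ := by
  ext σ
  simp only [mem_permsOfAbsLength, subset_empty, support_eq_empty_iff, notMem_empty, iff_false,
    not_and]
  rintro rfl
  simp [absLength]

theorem filter_permsOfAbsLength_insert {s : Finset α} {x : α} (hx : x ∉ s) (k : ℕ) :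
    (permsOfAbsLength (insert x s) k).filter (fun τ => τ x = x) = permsOfAbsLength s k := by
  ext τ
  simp only [mem_filter, mem_permsOfAbsLength, ← notMem_support]
  constructor
  · rintro ⟨⟨hτ, hk⟩, hxτ⟩
    exact ⟨fun y hy => (mem_insert.mp (hτ hy)).resolve_left (ne_of_mem_of_not_mem hy hxτ), hk⟩
  · rintro ⟨hτ, hk⟩
    exact ⟨⟨hτ.trans (subset_insert x s), hk⟩, fun h => hx (hτ h)⟩

variable {R : Type*} [Semiring R]

theorem sum_permsOfAbsLength_mul_sum_swap {s : Finset α} {x : α} (hx : x ∉ s) (k : ℕ) :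
    (∑ σ ∈ permsOfAbsLength s k, MonoidAlgebra.single σ (1 : R)) *
        ∑ a ∈ s, MonoidAlgebra.single (swap a x) 1 =
      ∑ τ ∈ (permsOfAbsLength (insert x s) (k + 1)).filter (fun τ => τ x ≠ x),
        MonoidAlgebra.single τ 1 := by
  simp_rw [sum_mul_sum, MonoidAlgebra.single_mul_single, one_mul, ← sum_product']
  refine sum_nbij' (fun p => p.1 * swap p.2 x) (fun τ => (τ * swap (τ⁻¹ x) x, τ⁻¹ x))
    ?_ ?_ ?_ ?_ fun _ _ => rfl
  · rintro ⟨σ, a⟩ hp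
    simp only [mem_product, mem_permsOfAbsLength] at hp
    obtain ⟨⟨hσ, rfl⟩, ha⟩ := hp
    have hσx : σ x = x := notMem_support.mp fun h => hx (hσ h)
    have hax : a ≠ x := ne_of_mem_of_not_mem ha hx
    simp only [mem_filter, mem_permsOfAbsLength, mul_apply, swap_apply_right]
    refine ⟨⟨(support_mul_le _ _).trans ?_, absLength_mul_swap hσx hax⟩,
      fun h => hax (σ.injective (h.trans hσx.symm))⟩
    rw [support_swap hax]
    exact union_subset (hσ.trans (subset_insert _ _)) (by simp [insert_subset_iff, ha])
  · intro τ hτ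
    simp only [mem_filter, mem_permsOfAbsLength] at hτ
    obtain ⟨⟨hτs, hk⟩, hτx⟩ := hτ
    set b := τ⁻¹ x with hb_def
    have hτb : τ b = x := by simp [hb_def]
    have hbx : b ≠ x := fun h => hτx (h ▸ hτb)
    have hb : b ∈ s :=
      (mem_insert.mp (hτs (mem_support.mpr (hτb ▸ hbx.symm)))).resolve_left hbx
    have hσx : (τ * swap b x) x = x := by simp [b]
    have hσ : (τ * swap b x).support ⊆ s := by
      intro y hy
      have hyx : y ≠ x := ne_of_mem_of_not_mem hy (notMem_support.mpr hσx)
      have := support_mul_le τ (swap b x) hy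
      rw [support_swap hbx] at this
      simp only [sup_eq_union, mem_union, mem_insert, mem_singleton, hyx, or_false] at this
      rcases this with h | rfl
      · exact (mem_insert.mp (hτs h)).resolve_left hyx
      · exact hb
    have hlen := absLength_mul_swap hσx hbx
    rw [mul_assoc, swap_mul_self, mul_one] at hlen
    simp only [mem_product, mem_permsOfAbsLength]
    exact ⟨⟨hσ, by omega⟩, hb⟩
  · rintro ⟨σ, a⟩ hp
    simp only [mem_product, mem_permsOfAbsLength] at hp
    have hσx : σ⁻¹ x = x := by
      rw [inv_eq_iff_eq]; exact (notMem_support.mp fun h => hx (hp.1.1 h)).symm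
    have : (σ * swap a x)⁻¹ x = a := by
      rw [mul_inv_rev, mul_apply, swap_inv, hσx, swap_apply_right]
    simp only [this, mul_assoc, swap_mul_self, mul_one]
  · intro τ _
    simp [mul_assoc]

end Equiv.Perm

theorem List.toFinset_append_singleton {ι : Type*} [DecidableEq ι] (l : List ι) (x : ι) :
    (l ++ [x]).toFinset = insert x l.toFinset := by
  ext; simp

section OrderedESymm

variable {ι A : Type*} [DecidableEq ι] [Semiring A]

/-- The `k`-th elementary symmetric function of the `f i`, `i ∈ l`, in a possibly noncommutative
semiring: each monomial is multiplied in the order of `l`. -/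
def orderedESymm (f : ι → A) (l : List ι) (k : ℕ) : A :=
  ∑ S ∈ l.toFinset.powersetCard k, (l.map fun i => if i ∈ S then f i else 1).prod

@[simp]
theorem orderedESymm_zero (f : ι → A) (l : List ι) : orderedESymm f l 0 = 1 := by
  simp [orderedESymm]

@[simp]
theorem orderedESymm_nil_succ (f : ι → A) (k : ℕ) : orderedESymm f [] (k + 1) = 0 := by
  simp [orderedESymm]

theorem orderedESymm_append_singleton_succ (f : ι → A) {l : List ι} {x : ι} (hx : x ∉ l)
    (k : ℕ) :
    orderedESymm f (l ++ [x]) (k + 1) = orderedESymm f l (k + 1) + orderedESymm f l k * f x := by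
  have hx' : x ∉ l.toFinset := List.mem_toFinset.not.mpr hx
  have hinj : Set.InjOn (insert x) (l.toFinset.powersetCard k : Set (Finset ι)) :=
    fun S hS T hT h => by
      rw [← erase_insert (fun h => hx' ((mem_powersetCard.mp hS).1 h)),
        ← erase_insert (fun h => hx' ((mem_powersetCard.mp hT).1 h)), h]
  rw [orderedESymm, List.toFinset_append_singleton, powersetCard_succ_insert hx', sum_union,
    sum_image hinj, orderedESymm, orderedESymm, sum_mul]
  · simp only [List.map_append, List.prod_append, List.map_singleton, List.prod_singleton]
    congr 1
    · refine sum_congr rfl fun S hS => ?_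
      have hxS : x ∉ S := fun h => hx' ((mem_powersetCard.mp hS).1 h)
      simp [hxS]
    · refine sum_congr rfl fun S _ => ?_
      rw [if_pos (mem_insert_self x S)]
      congr 2
      refine List.map_congr_left fun i hi => ?_
      simp [ne_of_mem_of_not_mem hi hx]
  · rw [disjoint_left]
    intro S hS hS'
    obtain ⟨T, -, rfl⟩ := mem_image.mp hS'
    exact hx' ((mem_powersetCard.mp hS).1 (mem_insert_self x T))

end OrderedESymm

section JucysMurphy

open Equiv.Perm

variable {α R : Type*} [DecidableEq α] [Fintype α] [Semiring R]

def IsJucysMurphyFamily (l : List α) (f : α → MonoidAlgebra R (Perm α)) : Prop :=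
  ∀ l₁ x l₂, l₁ ++ x :: l₂ = l → f x = ∑ a ∈ l₁.toFinset, MonoidAlgebra.single (swap a x) 1

theorem IsJucysMurphyFamily.orderedESymm_eq {l : List α} {f : α → MonoidAlgebra R (Perm α)}
    (hf : IsJucysMurphyFamily l f) (hl : l.Nodup) (k : ℕ) :
    orderedESymm f l k = ∑ σ ∈ permsOfAbsLength l.toFinset k, MonoidAlgebra.single σ 1 := by
  induction l using List.reverseRecOn generalizing k with
  | nil =>
    cases k <;> simp [permsOfAbsLength_zero, permsOfAbsLength_empty_succ, MonoidAlgebra.one_def]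
  | append_singleton l x ih =>
    obtain ⟨hx, hl⟩ := (List.nodup_concat l x).mp (by simpa using hl)
    cases k with
    | zero => simp [permsOfAbsLength_zero, MonoidAlgebra.one_def]
    | succ k =>
      have hfl : IsJucysMurphyFamily l f := fun l₁ y l₂ h => hf l₁ y (l₂ ++ [x]) (by simp [← h])
      have hx' : x ∉ l.toFinset := List.mem_toFinset.not.mpr hx
      rw [orderedESymm_append_singleton_succ f hx, ih hfl hl, ih hfl hl, hf l x [] rfl,
        sum_permsOfAbsLength_mul_sum_swap hx', List.toFinset_append_singleton,
        ← filter_permsOfAbsLength_insert hx', sum_filter_add_sum_filter_not]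

end JucysMurphy

theorem isJucysMurphyFamily_finRange (n : ℕ) :
    IsJucysMurphyFamily (List.finRange n) (jucysMurphy n) := by
  intro l₁ x l₂ h
  have hsorted := List.pairwise_lt_finRange n
  rw [← h, List.pairwise_append, List.pairwise_cons] at hsorted
  unfold jucysMurphy
  refine sum_congr (ext fun a => ?_) fun _ _ => rfl
  rw [mem_Iio, List.mem_toFinset]
  refine ⟨fun hax => ?_, fun ha => hsorted.2.2 a ha x List.mem_cons_self⟩
  have ha : a ∈ l₁ ++ x :: l₂ := h ▸ List.mem_finRange a
  simp only [List.mem_append, List.mem_cons] at ha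
  rcases ha with ha | rfl | ha
  · exact ha
  · exact absurd hax (lt_irrefl a)
  · exact absurd (hsorted.2.1.1 a ha) (lt_asymm hax)

theorem evalJM_eq_linearCombination (n : ℕ) (p : MvPolynomial (Fin n) ℚ) :
    evalJM n p = Finsupp.linearCombination ℚ
      (fun d : Fin n →₀ ℕ => ((List.finRange n).map fun i => jucysMurphy n i ^ d i).prod)
      (AddMonoidAlgebra.coeffLinearEquiv ℚ p) := by
  rw [Finsupp.linearCombination_apply]
  rfl

theorem evalJM_esymm (n k : ℕ) :
    evalJM n (MvPolynomial.esymm (Fin n) ℚ k) =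
      orderedESymm (jucysMurphy n) (List.finRange n) k := by
  rw [evalJM_eq_linearCombination, MvPolynomial.esymm_eq_sum_monomial, map_sum, map_sum,
    orderedESymm, List.toFinset_finRange]
  refine sum_congr rfl fun S _ => ?_
  simp only [MvPolynomial.monomial, AddMonoidAlgebra.lsingle_apply,
    AddMonoidAlgebra.coeffLinearEquiv_apply, AddMonoidAlgebra.coeff_single,
    Finsupp.linearCombination_single, one_smul]
  refine congrArg _ (List.map_congr_left fun i _ => ?_)
  split_ifs with hi <;> simp [Finsupp.single_apply, hi]

/-- Jucys correspondence: for `0 ≤ k ≤ n - 1`, the `k`-th elementary symmetric polynomial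
in the Jucys–Murphy elements equals `Σ_{μ ⊢ n, ℓ(μ) = n - k} C_μ`, i.e. the sum of all
permutations having exactly `n - k` cycles (fixed points included). -/
theorem jucys_correspondence (n k : ℕ) (hk : k ≤ n - 1) :
    evalJM n (MvPolynomial.esymm (Fin n) ℚ k) =
      ∑ σ ∈ Finset.univ.filter
          (fun σ : Equiv.Perm (Fin n) => (Equiv.Perm.partition σ).parts.card = n - k),
        MonoidAlgebra.single σ (1 : ℚ) := by
  rw [evalJM_esymm, (isJucysMurphyFamily_finRange n).orderedESymm_eq (List.nodup_finRange n),
    List.toFinset_finRange]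
  refine sum_congr (ext fun σ => ?_) fun _ _ => rfl
  have := σ.absLength_le_card
  simp only [Perm.mem_permsOfAbsLength, subset_univ, true_and, mem_filter, mem_univ,
    Perm.card_parts_partition, Fintype.card_fin] at this ⊢
  omega
end
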